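/- arXiv:1901.06382 — 6 statements merged into one kernel-verified Lean document; each statement's English description precedes it below -/
import Mathlib

section
/- If B_MU is an orthonormal basis of ℂ^d mutually unbiased to B0, i.e., X(B_MU,B0)_{ij} = 1/d for all i,j, then B ≻^{B0} B_MU for every orthonormal basis B of ℂ^d. -/
open Matrix

noncomputable def transMatrix {d : ℕ}
    (B C : OrthonormalBasis (Fin d) ℂ (EuclideanSpace ℂ (Fin d))) :
    Matrix (Fin d) (Fin d) ℝ :=
  Matrix.of fun i j => ‖(inner ℂ (B i) (C j) : ℂ)‖ ^ 2

def IsDoublyStochastic {d : ℕ} (M : Matrix (Fin d) (Fin d) ℝ) : Prop :=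
  (∀ i j, 0 ≤ M i j) ∧ (∀ i, ∑ j, M i j = 1) ∧ (∀ j, ∑ i, M i j = 1)

/-- `B1 ≻^{B0} B2` : there is a doubly stochastic `M` with `X(B2,B0) = M · X(B1,B0)`. -/
def BasisMaj {d : ℕ}
    (B0 B1 B2 : OrthonormalBasis (Fin d) ℂ (EuclideanSpace ℂ (Fin d))) : Prop :=
  ∃ M : Matrix (Fin d) (Fin d) ℝ, IsDoublyStochastic M ∧
    transMatrix B2 B0 = M * transMatrix B1 B0

/-! The uniform matrix `(1/d)` is doubly stochastic, and it maps every transition matrix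
`X(B,B0)` to itself, because the columns of `X(B,B0)` are the squared coordinates of the unit
vector `B0 j` in the basis `B` and so sum to `1` (Parseval). Hence `(1/d) · X(B,B0) = X(B_MU,B0)`. -/

lemma sum_transMatrix_apply {d : ℕ}
    (B C : OrthonormalBasis (Fin d) ℂ (EuclideanSpace ℂ (Fin d))) (j : Fin d) :
    ∑ i, transMatrix B C i j = 1 := by
  simp only [transMatrix, of_apply, B.sum_sq_norm_inner_right, C.orthonormal.1 j, one_pow]

lemma const_mul_eq_const_of_sum_col_eq_one {n : Type*} [Fintype n] {R : Type*} [Semiring R]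
    (c : R) {X : Matrix n n R} (hX : ∀ j, ∑ i, X i j = 1) :
    (of fun _ _ => c : Matrix n n R) * X = of fun _ _ => c := by
  ext i j
  simp only [mul_apply, of_apply, ← Finset.mul_sum, hX j, mul_one]

lemma isDoublyStochastic_uniform (d : ℕ) :
    IsDoublyStochastic (of fun _ _ => 1 / (d : ℝ) : Matrix (Fin d) (Fin d) ℝ) := by
  have sum_uniform (k : Fin d) : ∑ _ : Fin d, 1 / (d : ℝ) = 1 := by
    rw [Finset.sum_const, Finset.card_univ, Fintype.card_fin, nsmul_eq_mul,
      mul_one_div_cancel (Nat.cast_ne_zero.mpr k.pos.ne')]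
  exact ⟨fun _ _ => one_div_nonneg.mpr d.cast_nonneg, fun i => sum_uniform i, fun j => sum_uniform j⟩

/-- Measurement over any basis is more compatible than over a basis mutually
unbiased to `B0`: if `X(B_MU,B0)_{ij} = 1/d` for all `i,j` then `B ≻^{B0} B_MU`. -/
theorem basisMaj_mutuallyUnbiased {d : ℕ}
    (B0 BMU : OrthonormalBasis (Fin d) ℂ (EuclideanSpace ℂ (Fin d)))
    (hMU : ∀ i j, transMatrix BMU B0 i j = 1 / (d : ℝ)) :
    ∀ B : OrthonormalBasis (Fin d) ℂ (EuclideanSpace ℂ (Fin d)),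
      BasisMaj B0 B BMU := by
  intro B
  refine ⟨_, isDoublyStochastic_uniform d, ?_⟩
  rw [const_mul_eq_const_of_sum_col_eq_one _ (sum_transMatrix_apply B B0)]
  exact Matrix.ext hMU
end

section
/- Let φ : (Fin d → ℝ) → ℝ be a convex function. If B1 ≻^{B0} B2, then ∑_{i=1}^d φ(X(B2,B0)_i^R) ≤ ∑_{i=1}^d φ(X(B1,B0)_i^R), where X_i^R denotes the i-th row vector of the matrix X; that is, f^φ_{B0}(B) := ∑_i φ(X(B,B0)_i^R) is a measure of compatibility relative to B0. -/
open Matrix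

/-!
Row `i` of `X(B2,B0) = M · X(B1,B0)` is the convex combination `∑ k, M i k • X(B1,B0)_k`, so by
Jensen `φ` of it is at most `∑ k, M i k * φ (X(B1,B0)_k)`. Summing over `i`, each row `k` of
`X(B1,B0)` collects total weight `∑ i, M i k = 1`.
-/

theorem isDoublyStochastic_iff_mem_doublyStochastic {d : ℕ} {M : Matrix (Fin d) (Fin d) ℝ} :
    IsDoublyStochastic M ↔ M ∈ doublyStochastic ℝ (Fin d) :=
  mem_doublyStochastic_iff_sum.symm

section Jensen

variable {𝕜 E n : Type*} [Field 𝕜] [LinearOrder 𝕜] [IsStrictOrderedRing 𝕜]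
  [AddCommGroup E] [Module 𝕜 E] [Fintype n] [DecidableEq n]

theorem ConvexOn.sum_map_sum_smul_le_of_mem_doublyStochastic {s : Set E} {φ : E → 𝕜}
    (hφ : ConvexOn 𝕜 s φ) {M : Matrix n n 𝕜} (hM : M ∈ doublyStochastic 𝕜 n) {x : n → E}
    (hx : ∀ k, x k ∈ s) :
    ∑ i, φ (∑ k, M i k • x k) ≤ ∑ k, φ (x k) :=
  calc ∑ i, φ (∑ k, M i k • x k)
      ≤ ∑ i, ∑ k, M i k * φ (x k) := Finset.sum_le_sum fun i _ =>
        hφ.map_sum_le (fun k _ => nonneg_of_mem_doublyStochastic hM)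
          (sum_row_of_mem_doublyStochastic hM i) fun k _ => hx k
    _ = ∑ k, (∑ i, M i k) * φ (x k) := by
        rw [Finset.sum_comm]; simp only [Finset.sum_mul]
    _ = ∑ k, φ (x k) := by simp only [sum_col_of_mem_doublyStochastic hM, one_mul]

theorem ConvexOn.sum_map_row_mul_le_of_mem_doublyStochastic {m : Type*} [Fintype m]
    {φ : (m → 𝕜) → 𝕜} (hφ : ConvexOn 𝕜 Set.univ φ) {M : Matrix n n 𝕜}
    (hM : M ∈ doublyStochastic 𝕜 n) (X : Matrix n m 𝕜) :
    ∑ i, φ ((M * X) i) ≤ ∑ i, φ (X i) := by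
  simpa only [mul_apply_eq_vecMul, vecMul_eq_sum] using
    hφ.sum_map_sum_smul_le_of_mem_doublyStochastic hM fun k => Set.mem_univ (X k)

end Jensen

/-- For convex `φ`, `f^φ_{B0}(B) = ∑_i φ(X(B,B0)_i^R)` (sum of `φ` over the rows)
is a measure of compatibility relative to `B0`: it is monotone under `≻^{B0}`. -/
theorem sum_convex_rows_monotone {d : ℕ}
    (φ : (Fin d → ℝ) → ℝ) (hφ : ConvexOn ℝ Set.univ φ)
    (B0 B1 B2 : OrthonormalBasis (Fin d) ℂ (EuclideanSpace ℂ (Fin d)))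
    (h : BasisMaj B0 B1 B2) :
    ∑ i, φ (transMatrix B2 B0 i) ≤ ∑ i, φ (transMatrix B1 B0 i) := by
  obtain ⟨M, hM, hX⟩ := h
  rw [hX]
  exact hφ.sum_map_row_mul_le_of_mem_doublyStochastic
    (isDoublyStochastic_iff_mem_doublyStochastic.mp hM) _
end

section
/- If B1 ≻^{B0} B2, then for every vector p ∈ ℝ^d the Euclidean norms satisfy ‖X(B2,B0)·p‖₂ ≤ ‖X(B1,B0)·p‖₂. Equivalently, the 2-coherence satisfies c^{(2)}_{B1}(ρ0) ≤ c^{(2)}_{B2}(ρ0) for all states ρ0 diagonal in B0. -/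
open Matrix

/-!
Each row of a doubly stochastic matrix `M` is a probability vector, so by Jensen's inequality
for the square, `((M v) i)² ≤ (M (v²)) i`; summing over `i` and using that the columns of `M` sum
to `1` gives `‖M v‖₂ ≤ ‖v‖₂`. Apply this to `v = X(B1,B0) p`, since `X(B2,B0) p = M v`.
-/

namespace Matrix

variable {R n : Type*} [Fintype n] [DecidableEq n]
  [CommSemiring R] [LinearOrder R] [IsStrictOrderedRing R] [ExistsAddOfLE R]
  {M : Matrix n n R}

lemma sq_mulVec_le_mulVec_sq_of_mem_rowStochastic (hM : M ∈ rowStochastic R n)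
    (x : n → R) (i : n) : (M *ᵥ x) i ^ 2 ≤ (M *ᵥ x ^ 2) i := by
  have cauchySchwarz := Finset.sum_sq_le_sum_mul_sum_of_sq_le_mul Finset.univ
    (r := fun j => M i j * x j) (f := fun j => M i j) (g := fun j => M i j * x j ^ 2)
    (fun j _ => nonneg_of_mem_rowStochastic hM)
    (fun j _ => mul_nonneg (nonneg_of_mem_rowStochastic hM) (sq_nonneg _))
    (fun j _ => le_of_eq (by ring))
  simpa [mulVec, dotProduct, sum_row_of_mem_rowStochastic hM i] using cauchySchwarz

lemma sum_sq_mulVec_le_of_mem_doublyStochastic (hM : M ∈ doublyStochastic R n) (x : n → R) :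
    ∑ i, (M *ᵥ x) i ^ 2 ≤ ∑ i, x i ^ 2 := by
  have hRow := (mem_doublyStochastic_iff_mem_rowStochastic_and_mem_colStochastic.1 hM).1
  calc ∑ i, (M *ᵥ x) i ^ 2
      ≤ ∑ i, (M *ᵥ x ^ 2) i :=
        Finset.sum_le_sum fun i _ => sq_mulVec_le_mulVec_sq_of_mem_rowStochastic hRow x i
    _ = ∑ i, x i ^ 2 := sum_mulVec_of_mem_doublyStochastic hM

end Matrix

/-- If `B1 ≻^{B0} B2`, then for every vector `p` the Euclidean norms satisfy
`‖X(B2,B0)·p‖₂ ≤ ‖X(B1,B0)·p‖₂`. -/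
theorem basisMaj_euclidean_norm_le {d : ℕ}
    (B0 B1 B2 : OrthonormalBasis (Fin d) ℂ (EuclideanSpace ℂ (Fin d)))
    (h : BasisMaj B0 B1 B2) (p : Fin d → ℝ) :
    Real.sqrt (∑ i, ((transMatrix B2 B0).mulVec p i) ^ 2) ≤
      Real.sqrt (∑ i, ((transMatrix B1 B0).mulVec p i) ^ 2) := by
  obtain ⟨M, hM, hX⟩ := h
  have hM' : M ∈ doublyStochastic ℝ (Fin d) := mem_doublyStochastic_iff_sum.2 hM
  rw [hX, ← mulVec_mulVec]
  exact Real.sqrt_le_sqrt (sum_sq_mulVec_le_of_mem_doublyStochastic hM' _)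
end

section
/- Let B0 = (e_i) and B1 = (f_k) be orthonormal bases of ℂ^d, let X = X(B1,B0) with X_{ki} = ‖⟪f_k, e_i⟫‖², and let a ∈ ℝ^d with ∑_k a_k² = 1. Define Var_i(a) := ∑_k a_k² X_{ki} − (∑_k a_k X_{ki})². Then for every i, Var_i(a) ≤ 1 − λ_min(X·Xᵀ), where λ_min denotes the smallest eigenvalue of the positive semidefinite symmetric matrix X·Xᵀ. Hence Q_{B0}(B1) ≤ q(B1,B0) := 1 − λ_min(X·Xᵀ). -/
/-!
The matrix `X` of squared overlaps between two orthonormal bases is doubly stochastic. Each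
column of `X` is a probability vector, so `Var_i(a)` is a variance and hence nonnegative; summing
over all columns and using that the rows sum to one gives
`∑ⱼ Var_j(a) = ‖a‖² - ‖Xᵀ a‖² = 1 - aᵀ X Xᵀ a`, and `aᵀ X Xᵀ a ≥ λ_min(X Xᵀ)` by the Rayleigh
bound for the symmetric matrix `X Xᵀ`.
-/

open Matrix

/-- The smallest eigenvalue of a real square matrix, as the infimum of its set
of eigenvalues. -/
noncomputable def lamMin {d : ℕ} (A : Matrix (Fin d) (Fin d) ℝ) : ℝ :=
  sInf {μ : ℝ | ∃ v : Fin d → ℝ, v ≠ 0 ∧ A.mulVec v = μ • v}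

section Rayleigh

variable {n : Type*} [Fintype n] [DecidableEq n]

theorem Matrix.IsHermitian.mul_dotProduct_self_le {A : Matrix n n ℝ} (hA : A.IsHermitian)
    {c : ℝ} (hc : ∀ j, c ≤ hA.eigenvalues j) (a : n → ℝ) : c * (a ⬝ᵥ a) ≤ a ⬝ᵥ A *ᵥ a := by
  set U : Matrix n n ℝ := ↑hA.eigenvectorUnitary
  have hUt : star U = Uᵀ :=
    (star_eq_conjTranspose U).trans (conjTranspose_eq_transpose_of_trivial U)
  have hU : U * Uᵀ = 1 := hUt ▸ Unitary.mul_star_self_of_mem hA.eigenvectorUnitary.2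
  have hnorm : (Uᵀ *ᵥ a) ⬝ᵥ (Uᵀ *ᵥ a) = a ⬝ᵥ a := by
    rw [dotProduct_mulVec, vecMul_transpose, mulVec_mulVec, hU, one_mulVec]
  have hdiag : a ⬝ᵥ A *ᵥ a = ∑ j, hA.eigenvalues j * ((Uᵀ *ᵥ a) j * (Uᵀ *ᵥ a) j) := by
    conv_lhs => rw [hA.spectral_theorem, Unitary.conjStarAlgAut_apply]
    rw [← hUt, ← mulVec_mulVec, ← mulVec_mulVec, dotProduct_mulVec, ← mulVec_transpose]
    simp [U, dotProduct, mulVec_diagonal, star_eq_conjTranspose, mul_left_comm]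
  rw [← hnorm, hdiag, dotProduct, Finset.mul_sum]
  exact Finset.sum_le_sum fun j _ => mul_le_mul_of_nonneg_right (hc j) (mul_self_nonneg _)

end Rayleigh

theorem lamMin_eq_sInf_spectrum {d : ℕ} (A : Matrix (Fin d) (Fin d) ℝ) :
    lamMin A = sInf (spectrum ℝ A) := by
  refine congrArg sInf (Set.ext fun μ => ?_)
  simp only [Set.mem_ofPred_eq, ← spectrum_toLin', ← Module.End.hasEigenvalue_iff_mem_spectrum,
    Module.End.hasEigenvalue_iff, Submodule.ne_bot_iff, Module.End.mem_eigenspace_iff,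
    toLin'_apply, and_comm]

theorem Matrix.IsHermitian.lamMin_le_eigenvalues {d : ℕ} {A : Matrix (Fin d) (Fin d) ℝ}
    (hA : A.IsHermitian) (j : Fin d) : lamMin A ≤ hA.eigenvalues j := by
  rw [lamMin_eq_sInf_spectrum]
  exact csInf_le (finite_real_spectrum (A := A)).bddBelow (hA.eigenvalues_mem_spectrum_real j)

theorem Matrix.IsHermitian.lamMin_le_dotProduct_mulVec {d : ℕ} {A : Matrix (Fin d) (Fin d) ℝ}
    (hA : A.IsHermitian) {a : Fin d → ℝ} (ha : a ⬝ᵥ a = 1) : lamMin A ≤ a ⬝ᵥ A *ᵥ a := by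
  simpa [ha] using hA.mul_dotProduct_self_le hA.lamMin_le_eigenvalues a

section Variance

variable {n : Type*} [Fintype n]

/-- `Var_j(a)`: the variance of `a` under the probability weights of column `j` of `M`. -/
def colVariance (M : Matrix n n ℝ) (a : n → ℝ) (j : n) : ℝ :=
  ∑ k, a k ^ 2 * M k j - (∑ k, a k * M k j) ^ 2

variable [DecidableEq n] {M : Matrix n n ℝ}

theorem colVariance_nonneg (hM : M ∈ doublyStochastic ℝ n) (a : n → ℝ) (j : n) :
    0 ≤ colVariance M a j := by
  obtain ⟨hM0, -, hcol⟩ := mem_doublyStochastic_iff_sum.1 hM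
  refine sub_nonneg.2 ?_
  simpa [hcol j] using Finset.sum_sq_le_sum_mul_sum_of_sq_le_mul Finset.univ
    (fun k _ => mul_nonneg (sq_nonneg (a k)) (hM0 k j)) (fun k _ => hM0 k j)
    (fun k _ => (by ring : (a k * M k j) ^ 2 = a k ^ 2 * M k j * M k j).le)

theorem sum_colVariance (hM : M ∈ doublyStochastic ℝ n) (a : n → ℝ) :
    ∑ j, colVariance M a j = a ⬝ᵥ a - a ⬝ᵥ (M * Mᵀ) *ᵥ a := by
  obtain ⟨-, hrow, -⟩ := mem_doublyStochastic_iff_sum.1 hM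
  have hfirst : ∑ j, ∑ k, a k ^ 2 * M k j = a ⬝ᵥ a := by
    simp [Finset.sum_comm (γ := n), ← Finset.mul_sum, hrow, dotProduct, sq]
  have hsecond : ∑ j, (∑ k, a k * M k j) ^ 2 = a ⬝ᵥ (M * Mᵀ) *ᵥ a := by
    rw [← mulVec_mulVec, dotProduct_mulVec, mulVec_transpose]
    simp [dotProduct, vecMul, sq]
  rw [← hfirst, ← hsecond, ← Finset.sum_sub_distrib]
  rfl

theorem colVariance_le (hM : M ∈ doublyStochastic ℝ n) (a : n → ℝ) (i : n) :
    colVariance M a i ≤ a ⬝ᵥ a - a ⬝ᵥ (M * Mᵀ) *ᵥ a :=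
  sum_colVariance hM a ▸
    Finset.single_le_sum (fun j _ => colVariance_nonneg hM a j) (Finset.mem_univ i)

end Variance

theorem transMatrix_mem_doublyStochastic {d : ℕ}
    (B C : OrthonormalBasis (Fin d) ℂ (EuclideanSpace ℂ (Fin d))) :
    transMatrix B C ∈ doublyStochastic ℝ (Fin d) := by
  refine mem_doublyStochastic_iff_sum.2
    ⟨fun k i => by simp only [transMatrix, of_apply]; positivity, fun k => ?_, fun i => ?_⟩
  · simp [transMatrix, C.sum_sq_norm_inner_left, B.orthonormal.1 k]
  · simp [transMatrix, B.sum_sq_norm_inner_right, C.orthonormal.1 i]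

/-- For `X = X(B1,B0)` (with `X_{ki} = ‖⟪f_k, e_i⟫‖²`) and a unit vector `a`
(`∑ a_k² = 1`), the variance `Var_i(a) = ∑_k a_k² X_{ki} − (∑_k a_k X_{ki})²`
is bounded by `1 − λ_min(X·Xᵀ)` for every `i`. -/
theorem variance_le_one_sub_lamMin {d : ℕ}
    (B0 B1 : OrthonormalBasis (Fin d) ℂ (EuclideanSpace ℂ (Fin d)))
    (a : Fin d → ℝ) (ha : ∑ k, (a k) ^ 2 = 1) (i : Fin d) :
    (∑ k, (a k) ^ 2 * transMatrix B1 B0 k i) -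
        (∑ k, a k * transMatrix B1 B0 k i) ^ 2 ≤
      1 - lamMin (transMatrix B1 B0 * (transMatrix B1 B0)ᵀ) := by
  set X := transMatrix B1 B0
  have hunit : a ⬝ᵥ a = 1 := by simpa [dotProduct, sq] using ha
  have hXXt : (X * Xᵀ).IsHermitian := isHermitian_iff_isSymm.2 (isSymm_mul_transpose_self X)
  calc colVariance X a i ≤ a ⬝ᵥ a - a ⬝ᵥ (X * Xᵀ) *ᵥ a :=
        colVariance_le (transMatrix_mem_doublyStochastic B1 B0) a i
    _ ≤ 1 - lamMin (X * Xᵀ) := by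
        rw [hunit]
        exact sub_le_sub_left (hXXt.lamMin_le_dotProduct_mulVec hunit) 1
end

section
/- If B1 ≻^{B0} B2, then q(B1,B0) ≤ q(B2,B0), i.e., λ_min(X(B2,B0)·X(B2,B0)ᵀ) ≤ λ_min(X(B1,B0)·X(B1,B0)ᵀ): the smallest singular value of the transition matrix is non-increasing under left multiplication by a doubly stochastic matrix. -/
open Matrix

/-! For a real square matrix `X`, the products `X * Xᵀ` and `Xᵀ * X` have the same characteristic
polynomial, hence the same smallest eigenvalue, and for the symmetric matrix `Xᵀ * X` this
eigenvalue is the minimum of the Rayleigh quotient `‖X x‖² / ‖x‖²`. A doubly stochastic `M` is a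
contraction of Euclidean space (Cauchy–Schwarz on each row against the weights `M i ·`, then
sum using the column sums), so `‖M A x‖ ≤ ‖A x‖` for all `x`, and the minimum can only drop
when `A` is replaced by `M * A`. -/

open Module.End
open scoped RealInnerProductSpace

namespace LinearMap

variable {E : Type*} [NormedAddCommGroup E] [InnerProductSpace ℝ E] [FiniteDimensional ℝ E]

theorem bddBelow_rayleigh (T : E →ₗ[ℝ] E) :
    BddBelow (Set.range fun x : {x : E // x ≠ 0} => ⟪T x, x⟫ / ‖(x : E)‖ ^ 2) :=
  ⟨-‖T.toContinuousLinearMap‖, by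
    rintro _ ⟨x, rfl⟩
    exact neg_le_of_abs_le (T.toContinuousLinearMap.rayleighQuotient_le_norm x)⟩

theorem IsSymmetric.sInf_eigenvalues_eq_iInf_rayleigh [Nontrivial E] {T : E →ₗ[ℝ] E}
    (hT : T.IsSymmetric) :
    sInf {μ | HasEigenvalue T μ} = ⨅ x : {x : E // x ≠ 0}, ⟪T x, x⟫ / ‖(x : E)‖ ^ 2 := by
  have hmin : HasEigenvalue T (⨅ x : {x : E // x ≠ 0}, ⟪T x, x⟫ / ‖(x : E)‖ ^ 2) := by
    simpa using hT.hasEigenvalue_iInf_of_finiteDimensional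
  have hlow (μ : ℝ) (hμ : HasEigenvalue T μ) :
      ⨅ x : {x : E // x ≠ 0}, ⟪T x, x⟫ / ‖(x : E)‖ ^ 2 ≤ μ := by
    obtain ⟨x, hx⟩ := hμ.exists_hasEigenvector
    have hx0 : ‖x‖ ≠ 0 := norm_ne_zero_iff.2 hx.2
    refine (ciInf_le (bddBelow_rayleigh T) ⟨x, hx.2⟩).trans_eq ?_
    rw [hx.apply_eq_smul, real_inner_smul_left, real_inner_self_eq_norm_sq]
    field_simp
  exact le_antisymm (csInf_le ⟨_, hlow⟩ hmin) (le_csInf ⟨_, hmin⟩ hlow)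

theorem IsSymmetric.sInf_eigenvalues_mono {S T : E →ₗ[ℝ] E} (hS : S.IsSymmetric)
    (hT : T.IsSymmetric) (hST : ∀ x, ⟪S x, x⟫ ≤ ⟪T x, x⟫) :
    sInf {μ | HasEigenvalue S μ} ≤ sInf {μ | HasEigenvalue T μ} := by
  rcases subsingleton_or_nontrivial E with hE | hE
  · have hnone (U : E →ₗ[ℝ] E) : {μ | HasEigenvalue U μ} = ∅ :=
      Set.eq_empty_of_forall_notMem fun μ hμ => hμ (Subsingleton.elim _ _)
    rw [hnone, hnone]
  · rw [hS.sInf_eigenvalues_eq_iInf_rayleigh, hT.sInf_eigenvalues_eq_iInf_rayleigh]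
    exact ciInf_mono (bddBelow_rayleigh S) fun x =>
      div_le_div_of_nonneg_right (hST x) (sq_nonneg _)

end LinearMap

namespace Matrix

theorem isHermitian_transpose_mul_self {m n : Type*} [Fintype m] (X : Matrix m n ℝ) :
    (Xᵀ * X).IsHermitian := by
  simpa using isHermitian_conjTranspose_mul_self X

variable {m n : Type*} [Fintype m] [Fintype n] [DecidableEq m] [DecidableEq n]

theorem exists_mulVec_eq_smul_iff_isRoot_charpoly {K : Type*} [Field K] (A : Matrix n n K)
    (μ : K) : (∃ v : n → K, v ≠ 0 ∧ A *ᵥ v = μ • v) ↔ A.charpoly.IsRoot μ := by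
  rw [← charpoly_toLin', ← hasEigenvalue_iff_isRoot_charpoly, hasEigenvalue_iff,
    Submodule.ne_bot_iff]
  simp only [mem_eigenspace_iff, toLin'_apply, and_comm]

theorem hasEigenvalue_toEuclideanLin_iff_isRoot_charpoly (A : Matrix n n ℝ) (μ : ℝ) :
    HasEigenvalue (toEuclideanLin A) μ ↔ A.charpoly.IsRoot μ := by
  rw [toEuclideanLin_eq_toLin_orthonormal, hasEigenvalue_iff_isRoot_charpoly, charpoly_toLin]

theorem inner_toEuclideanLin_transpose_mul_self (X : Matrix m n ℝ) (x : EuclideanSpace ℝ n) :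
    ⟪toEuclideanLin (Xᵀ * X) x, x⟫ = ‖toEuclideanLin X x‖ ^ 2 := by
  rw [← conjTranspose_eq_transpose_of_trivial, ← real_inner_self_eq_norm_sq,
    ← LinearMap.adjoint_inner_left, ← toEuclideanLin_conjTranspose_eq_adjoint, toLpLin_mul_same,
    LinearMap.comp_apply]

end Matrix

theorem lamMin_eq_sInf_isRoot_charpoly {d : ℕ} (A : Matrix (Fin d) (Fin d) ℝ) :
    lamMin A = sInf {μ | A.charpoly.IsRoot μ} := by
  simp only [lamMin, exists_mulVec_eq_smul_iff_isRoot_charpoly]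

theorem lamMin_mul_comm {d : ℕ} (A B : Matrix (Fin d) (Fin d) ℝ) :
    lamMin (A * B) = lamMin (B * A) := by
  rw [lamMin_eq_sInf_isRoot_charpoly, lamMin_eq_sInf_isRoot_charpoly, charpoly_mul_comm]

theorem lamMin_eq_sInf_hasEigenvalue {d : ℕ} (A : Matrix (Fin d) (Fin d) ℝ) :
    lamMin A = sInf {μ | HasEigenvalue (toEuclideanLin A) μ} := by
  simp only [lamMin_eq_sInf_isRoot_charpoly, hasEigenvalue_toEuclideanLin_iff_isRoot_charpoly]

theorem lamMin_mono {d : ℕ} {S T : Matrix (Fin d) (Fin d) ℝ} (hS : S.IsHermitian)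
    (hT : T.IsHermitian) (hST : ∀ x, ⟪toEuclideanLin S x, x⟫ ≤ ⟪toEuclideanLin T x, x⟫) :
    lamMin S ≤ lamMin T := by
  rw [lamMin_eq_sInf_hasEigenvalue, lamMin_eq_sInf_hasEigenvalue]
  exact (isSymmetric_toEuclideanLin_iff.2 hS).sInf_eigenvalues_mono
    (isSymmetric_toEuclideanLin_iff.2 hT) hST

open Finset in
theorem IsDoublyStochastic.sum_sq_mulVec_le {d : ℕ} {M : Matrix (Fin d) (Fin d) ℝ}
    (hM : IsDoublyStochastic M) (v : Fin d → ℝ) : ∑ i, (M *ᵥ v) i ^ 2 ≤ ∑ j, v j ^ 2 := by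
  obtain ⟨hnonneg, hrow, hcol⟩ := hM
  have hrow_sq (i : Fin d) : (M *ᵥ v) i ^ 2 ≤ ∑ j, M i j * v j ^ 2 := by
    simpa [mulVec, dotProduct, hrow i] using
      sum_sq_le_sum_mul_sum_of_sq_le_mul univ (fun j _ => hnonneg i j)
        (fun j _ => mul_nonneg (hnonneg i j) (sq_nonneg (v j)))
        (r := fun j => M i j * v j) (fun j _ => (by ring : _ = _).le)
  calc ∑ i, (M *ᵥ v) i ^ 2 ≤ ∑ i, ∑ j, M i j * v j ^ 2 := sum_le_sum fun i _ => hrow_sq i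
    _ = ∑ j, v j ^ 2 := by simp only [sum_comm (γ := Fin d), ← sum_mul, hcol, one_mul]

theorem IsDoublyStochastic.norm_toEuclideanLin_apply_le {d : ℕ} {M : Matrix (Fin d) (Fin d) ℝ}
    (hM : IsDoublyStochastic M) (x : EuclideanSpace ℝ (Fin d)) :
    ‖toEuclideanLin M x‖ ≤ ‖x‖ := by
  simp only [EuclideanSpace.norm_eq, Real.norm_eq_abs, sq_abs, ofLp_toLpLin, toLin'_apply]
  exact Real.sqrt_le_sqrt (hM.sum_sq_mulVec_le x.ofLp)

/-- If `B1 ≻^{B0} B2` then `q(B1,B0) ≤ q(B2,B0)`, i.e.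
`λ_min(X(B2,B0)·X(B2,B0)ᵀ) ≤ λ_min(X(B1,B0)·X(B1,B0)ᵀ)`. -/
theorem basisMaj_lamMin_le {d : ℕ}
    (B0 B1 B2 : OrthonormalBasis (Fin d) ℂ (EuclideanSpace ℂ (Fin d)))
    (h : BasisMaj B0 B1 B2) :
    lamMin (transMatrix B2 B0 * (transMatrix B2 B0)ᵀ) ≤
      lamMin (transMatrix B1 B0 * (transMatrix B1 B0)ᵀ) := by
  obtain ⟨M, hM, hX⟩ := h
  rw [lamMin_mul_comm, lamMin_mul_comm (transMatrix B1 B0)]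
  refine lamMin_mono (isHermitian_transpose_mul_self _) (isHermitian_transpose_mul_self _)
    fun x => ?_
  rw [inner_toEuclideanLin_transpose_mul_self, inner_toEuclideanLin_transpose_mul_self, hX,
    toLpLin_mul_same, LinearMap.comp_apply]
  gcongr
  exact hM.norm_toEuclideanLin_apply_le _
end

section
/- Let ψ : (Fin d → ℝ) → ℝ be convex and positively homogeneous of degree 1 (ψ(t·x) = t·ψ(x) for all t ≥ 0). Let X and Y be real matrices with d columns (with n and m rows respectively) and let M be an m×n real matrix with nonnegative entries whose every column sums to 1, such that Y = M·X. Then ∑_{i=1}^m ψ(Y_i^R) ≤ ∑_{k=1}^n ψ(X_k^R), where X_k^R denotes the k-th row vector. In particular, if F ≻≻^{B0} G for POVMs F, G (i.e., X(G,B0) = M·X(F,B0) with M column stochastic), then g^ψ_{B0}(G) ≤ g^ψ_{B0}(F) where g^ψ_{B0}(F) := ∑_i ψ(X(F,B0)_i^R). -/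
open Matrix ComplexOrder

/-- A POVM on ℂ^d with `n` outcomes: positive semidefinite matrices summing to the identity. -/
structure POVM (n d : ℕ) where
  elem : Fin n → Matrix (Fin d) (Fin d) ℂ
  posSemidef : ∀ i, (elem i).PosSemidef
  sum_eq_one : ∑ i, elem i = 1

/-- The matrix of the rank-one orthogonal projection onto the `j`-th vector of
an orthonormal basis: `(P_j)_{ab} = e_j(a) · conj(e_j(b))`. -/
noncomputable def projMat {d : ℕ}
    (B : OrthonormalBasis (Fin d) ℂ (EuclideanSpace ℂ (Fin d))) (j : Fin d) :
    Matrix (Fin d) (Fin d) ℂ :=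
  Matrix.of fun a b => B j a * star (B j b)

/-- The transition matrix of a POVM relative to a basis:
`X(F,B0)_{ij} = Tr(F_i · P_j)`. -/
noncomputable def povmTrans {n d : ℕ} (F : POVM n d)
    (B0 : OrthonormalBasis (Fin d) ℂ (EuclideanSpace ℂ (Fin d))) :
    Matrix (Fin n) (Fin d) ℝ :=
  Matrix.of fun i j => (Matrix.trace (F.elem i * projMat B0 j)).re

lemma psi_zero {d : ℕ} (ψ : (Fin d → ℝ) → ℝ)
    (hhom : ∀ t : ℝ, 0 ≤ t → ∀ x : Fin d → ℝ, ψ (t • x) = t * ψ x) :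
    ψ 0 = 0 := by
  have := hhom 0 le_rfl 0
  simpa using this

lemma psi_subadd {d : ℕ} (ψ : (Fin d → ℝ) → ℝ) (hconv : ConvexOn ℝ Set.univ ψ)
    (hhom : ∀ t : ℝ, 0 ≤ t → ∀ x : Fin d → ℝ, ψ (t • x) = t * ψ x)
    (x y : Fin d → ℝ) : ψ (x + y) ≤ ψ x + ψ y := by
  have h := hconv.2 (Set.mem_univ x) (Set.mem_univ y)
    (by norm_num : (0:ℝ) ≤ (1/2:ℝ)) (by norm_num : (0:ℝ) ≤ (1/2:ℝ)) (by norm_num)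
  have h2 : ψ (x + y) = 2 * ψ ((1/2:ℝ) • x + (1/2:ℝ) • y) := by
    rw [show (1/2:ℝ) • x + (1/2:ℝ) • y = (1/2:ℝ) • (x + y) by module,
      hhom (1/2) (by norm_num)]
    ring
  simp only [smul_eq_mul] at h
  rw [h2]; linarith

lemma psi_sum_le {d : ℕ} (ψ : (Fin d → ℝ) → ℝ) (hconv : ConvexOn ℝ Set.univ ψ)
    (hhom : ∀ t : ℝ, 0 ≤ t → ∀ x : Fin d → ℝ, ψ (t • x) = t * ψ x)
    {ι : Type*} (s : Finset ι) (c : ι → ℝ) (x : ι → Fin d → ℝ)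
    (hc : ∀ k ∈ s, 0 ≤ c k) :
    ψ (∑ k ∈ s, c k • x k) ≤ ∑ k ∈ s, c k * ψ (x k) := by
  induction s using Finset.cons_induction with
  | empty => simp [psi_zero ψ hhom]
  | cons a s ha ih =>
    rw [Finset.sum_cons, Finset.sum_cons]
    calc ψ (c a • x a + ∑ k ∈ s, c k • x k)
        ≤ ψ (c a • x a) + ψ (∑ k ∈ s, c k • x k) := psi_subadd ψ hconv hhom _ _
      _ ≤ c a * ψ (x a) + ∑ k ∈ s, c k * ψ (x k) := by
          have := hhom (c a) (hc a (Finset.mem_cons_self a s)) (x a)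
          have := ih (fun k hk => hc k (Finset.mem_cons_of_mem hk))
          linarith [hhom (c a) (hc a (Finset.mem_cons_self a s)) (x a),
            ih (fun k hk => hc k (Finset.mem_cons_of_mem hk))]

/-- For `ψ` convex and positively homogeneous of degree one, the sum of `ψ` over
the rows does not increase under left multiplication by a column-stochastic
matrix: if `Y = M·X` with `M` column stochastic, then `∑ᵢ ψ(Yᵢᴿ) ≤ ∑ₖ ψ(Xₖᴿ)`.
In particular, if `F ≻≻^{B0} G` for POVMs (i.e. `X(G,B0) = M·X(F,B0)` with `M`
column stochastic), then `g^ψ_{B0}(G) ≤ g^ψ_{B0}(F)`. -/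
theorem sum_convex_homogeneous_rows_monotone {d : ℕ}
    (ψ : (Fin d → ℝ) → ℝ) (hconv : ConvexOn ℝ Set.univ ψ)
    (hhom : ∀ t : ℝ, 0 ≤ t → ∀ x : Fin d → ℝ, ψ (t • x) = t * ψ x) :
    (∀ (n m : ℕ) (X : Matrix (Fin n) (Fin d) ℝ) (Y : Matrix (Fin m) (Fin d) ℝ)
        (M : Matrix (Fin m) (Fin n) ℝ),
        (∀ i j, 0 ≤ M i j) → (∀ j, ∑ i, M i j = 1) → Y = M * X →
        ∑ i, ψ (Y i) ≤ ∑ k, ψ (X k)) ∧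
    (∀ (n m : ℕ) (F : POVM n d) (G : POVM m d)
        (B0 : OrthonormalBasis (Fin d) ℂ (EuclideanSpace ℂ (Fin d)))
        (M : Matrix (Fin m) (Fin n) ℝ),
        (∀ i j, 0 ≤ M i j) → (∀ j, ∑ i, M i j = 1) →
        povmTrans G B0 = M * povmTrans F B0 →
        ∑ i, ψ (povmTrans G B0 i) ≤ ∑ k, ψ (povmTrans F B0 k)) := by
  have main : ∀ (n m : ℕ) (X : Matrix (Fin n) (Fin d) ℝ) (Y : Matrix (Fin m) (Fin d) ℝ)
      (M : Matrix (Fin m) (Fin n) ℝ),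
      (∀ i j, 0 ≤ M i j) → (∀ j, ∑ i, M i j = 1) → Y = M * X →
      ∑ i, ψ (Y i) ≤ ∑ k, ψ (X k) := by
    intro n m X Y M hM hcol hYX
    have hrow : ∀ i, Y i = ∑ k, M i k • X k := by
      intro i
      funext j
      simp [hYX, Matrix.mul_apply, Finset.sum_apply]
    calc ∑ i, ψ (Y i) ≤ ∑ i, ∑ k, M i k * ψ (X k) := by
          apply Finset.sum_le_sum
          intro i _
          rw [hrow i]
          exact psi_sum_le ψ hconv hhom _ _ _ (fun k _ => hM i k)
      _ = ∑ k, ψ (X k) := by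
          rw [Finset.sum_comm]
          simp [← Finset.sum_mul, hcol]
  exact ⟨main, fun n m F G B0 M hM hcol h =>
    main n m (povmTrans F B0) (povmTrans G B0) M hM hcol h⟩
end
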